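/- The Cramér series function λ(τ) = τ^{−3} (K(z₀(τ)) − τ z₀(τ) + τ²/2) (extended analytically at τ = 0) satisfies |λ(τ)| ≤ 700 α^{−3} for all |τ| ≤ α³/64. -/

import Mathlib

/-!
Put `f(τ) = K(z₀ τ) − τ z₀(τ) + τ²/2`. Since `K'(z₀ τ) = τ`, the chain rule gives
`f'(τ) = τ − z₀(τ)`, and `f(0) = 0`, so by the mean value inequality it suffices to show
`|τ − z₀(τ)| ≤ 128 α⁻³ |τ|²`. With `M` the complex moment generating function and `w = z₀(τ)`,
the saddle point equation reads `τ = M'(w) / M(w)`. As `E X = 0` and `E X² = 1`, the bound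
`|eᵘ − 1 − u| ≤ |u|² e^{|u|}` together with `E e^{α|X|} ≤ 2` gives `M(w) − 1 = O(α⁻² |w|²)` and
`M'(w) − w = O(α⁻³ |w|²)`, hence `τ − w = O(α⁻³ |w|²)`, and `|w| ≤ 2 |τ|`.
-/

open MeasureTheory ProbabilityTheory
open scoped Nat Complex

lemma pow_mul_exp_mul_le {t c : ℝ} (ht : 0 ≤ t) (hc : c < 1) (n : ℕ) :
    t ^ n * Real.exp (c * t) ≤ n ! / (1 - c) ^ n * Real.exp t := by
  have hc' : 0 < 1 - c := by linarith
  have htaylor := Real.pow_div_factorial_le_exp _ (mul_nonneg hc'.le ht) n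
  calc t ^ n * Real.exp (c * t)
      = n ! / (1 - c) ^ n * (((1 - c) * t) ^ n / n !) * Real.exp (c * t) := by
        rw [mul_pow]
        field_simp
    _ ≤ n ! / (1 - c) ^ n * Real.exp ((1 - c) * t) * Real.exp (c * t) := by gcongr
    _ = n ! / (1 - c) ^ n * Real.exp t := by
        rw [mul_assoc, ← Real.exp_add]; ring_nf

lemma norm_pow_mul_cexp_sub_one_sub_le {α c : ℝ} (hα : 0 < α) (hc : c < 1) {z : ℂ}
    (hz : ‖z‖ ≤ c * α) (x : ℝ) (n : ℕ) :
    ‖(x : ℂ) ^ n * (cexp (z * x) - 1 - z * x)‖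
      ≤ (n + 2)! / (1 - c) ^ (n + 2) * α⁻¹ ^ (n + 2) * ‖z‖ ^ 2 * Real.exp (α * |x|) := by
  have hzx : ‖z * x‖ ≤ c * (α * |x|) := by
    rw [norm_mul, Complex.norm_real, Real.norm_eq_abs, ← mul_assoc]
    gcongr
  have htaylor : ‖cexp (z * x) - 1 - z * x‖ ≤ ‖z * x‖ ^ 2 * Real.exp ‖z * x‖ := by
    simpa [Finset.sum_range_succ, sub_sub] using Complex.norm_exp_sub_sum_le_norm_mul_exp (z * x) 2
  calc ‖(x : ℂ) ^ n * (cexp (z * x) - 1 - z * x)‖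
      ≤ |x| ^ n * (‖z * x‖ ^ 2 * Real.exp (c * (α * |x|))) := by
        rw [norm_mul, norm_pow, Complex.norm_real, Real.norm_eq_abs]
        gcongr
        exact htaylor.trans (by gcongr)
    _ = α⁻¹ ^ (n + 2) * ‖z‖ ^ 2 * ((α * |x|) ^ (n + 2) * Real.exp (c * (α * |x|))) := by
        rw [norm_mul, Complex.norm_real, Real.norm_eq_abs, mul_pow α, inv_pow]
        field_simp [hα.ne']
        ring
    _ ≤ α⁻¹ ^ (n + 2) * ‖z‖ ^ 2 * ((n + 2)! / (1 - c) ^ (n + 2) * Real.exp (α * |x|)) :=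
        mul_le_mul_of_nonneg_left (pow_mul_exp_mul_le (by positivity) hc _) (by positivity)
    _ = _ := by ring

lemma norm_div_sub_le {M M₁ w : ℂ} (hM : ‖M - 1‖ ≤ 1 / 2) :
    ‖M₁ / M - w‖ ≤ 2 * (‖M₁ - w‖ + ‖w‖ * ‖M - 1‖) := by
  have hMnorm : 1 / 2 ≤ ‖M‖ := by
    have := norm_sub_norm_le (1 : ℂ) M
    rw [norm_sub_rev, norm_one] at this
    linarith
  have hM0 : M ≠ 0 := by
    rintro rfl; norm_num at hMnorm
  have hsplit : M₁ / M - w = ((M₁ - w) - w * (M - 1)) / M := by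
    field_simp; ring
  rw [hsplit, norm_div, div_le_iff₀ (by positivity)]
  calc ‖M₁ - w - w * (M - 1)‖ ≤ ‖M₁ - w‖ + ‖w‖ * ‖M - 1‖ := by
        simpa [norm_mul] using norm_sub_le (M₁ - w) (w * (M - 1))
    _ ≤ 2 * (‖M₁ - w‖ + ‖w‖ * ‖M - 1‖) * ‖M‖ := by
        nlinarith [norm_nonneg (M₁ - w), norm_nonneg w, norm_nonneg (M - 1),
          mul_nonneg (norm_nonneg w) (norm_nonneg (M - 1))]

lemma norm_le_mul_pow_three_of_norm_deriv_le {𝕜 E : Type*} [RCLike 𝕜] [NormedAddCommGroup E]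
    [NormedSpace 𝕜 E] {f g : 𝕜 → E} {r C : ℝ} (hC : 0 ≤ C) (hf0 : f 0 = 0)
    (hf : ∀ x : 𝕜, ‖x‖ ≤ r → HasDerivAt f (g x) x ∧ ‖g x‖ ≤ C * ‖x‖ ^ 2)
    {y : 𝕜} (hy : ‖y‖ ≤ r) : ‖f y‖ ≤ C * ‖y‖ ^ 3 := by
  have hball : ∀ x ∈ Metric.closedBall (0 : 𝕜) ‖y‖, ‖x‖ ≤ ‖y‖ := by
    simp
  have hmvt := (convex_closedBall (0 : 𝕜) ‖y‖).norm_image_sub_le_of_norm_hasDerivWithin_le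
    (f' := g) (C := C * ‖y‖ ^ 2) (x := 0) (y := y)
    (fun x hx => ((hf x ((hball x hx).trans hy)).1).hasDerivWithinAt)
    (fun x hx => (hf x ((hball x hx).trans hy)).2.trans
      (mul_le_mul_of_nonneg_left (pow_le_pow_left₀ (norm_nonneg _) (hball x hx) 2) hC))
    (Metric.mem_closedBall_self (norm_nonneg y)) (by simp)
  rw [hf0, sub_zero, sub_zero] at hmvt
  exact hmvt.trans_eq (by ring)

lemma hasDerivAt_comp_sub_mul_add_sq_div_two {𝕜 : Type*} [RCLike 𝕜] {K z₀ : 𝕜 → 𝕜} {σ z' : 𝕜}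
    (hK : HasDerivAt K σ (z₀ σ)) (hz₀ : HasDerivAt z₀ z' σ) :
    HasDerivAt (fun s => K (z₀ s) - s * z₀ s + s ^ 2 / 2) (σ - z₀ σ) σ := by
  refine (((hK.comp σ hz₀).sub ((hasDerivAt_id' σ).mul hz₀)).add
    ((hasDerivAt_pow 2 σ).div_const 2)).congr_deriv ?_
  norm_num
  ring

section MomentBounds

variable {Ω : Type*} [MeasurableSpace Ω] {P : Measure Ω} {X : Ω → ℝ} {α : ℝ}

lemma integrable_and_integral_le_of_lintegral_ofReal_le {f : Ω → ℝ}
    (hf : AEStronglyMeasurable f P) (hf0 : 0 ≤ f) {C : ℝ} (hC : 0 ≤ C)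
    (h : ∫⁻ ω, ENNReal.ofReal (f ω) ∂P ≤ ENNReal.ofReal C) :
    Integrable f P ∧ ∫ ω, f ω ∂P ≤ C := by
  refine ⟨⟨hf, (hasFiniteIntegral_iff_ofReal (ae_of_all _ hf0)).2
    (h.trans_lt ENNReal.ofReal_lt_top)⟩, ?_⟩
  rw [integral_eq_lintegral_of_nonneg_ae (ae_of_all _ hf0) hf]
  exact ENNReal.toReal_le_of_le_ofReal hC h

lemma Icc_subset_integrableExpSet (hX : AEMeasurable X P)
    (hE : Integrable (fun ω => Real.exp (α * |X ω|)) P) :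
    Set.Icc (-α) α ⊆ integrableExpSet X P := by
  intro t ht
  refine hE.mono' (by fun_prop) (ae_of_all _ fun ω => ?_)
  rw [Real.norm_eq_abs, Real.abs_exp, Real.exp_le_exp]
  calc t * X ω ≤ |t| * |X ω| := by rw [← abs_mul]; exact le_abs_self _
    _ ≤ α * |X ω| := by gcongr; exact abs_le.2 ht

lemma re_mem_interior_integrableExpSet (hX : AEMeasurable X P)
    (hE : Integrable (fun ω => Real.exp (α * |X ω|)) P) {z : ℂ} (hz : ‖z‖ < α) :
    z.re ∈ interior (integrableExpSet X P) := by
  refine interior_mono (Icc_subset_integrableExpSet hX hE) ?_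
  rw [interior_Icc]
  exact abs_lt.1 ((Complex.abs_re_le_norm z).trans_lt hz)

lemma sq_le_two_of_integral_exp_mul_abs_le [IsProbabilityMeasure P] (hX : AEMeasurable X P)
    (hα : 0 < α) (hE : Integrable (fun ω => Real.exp (α * |X ω|)) P)
    (hE2 : ∫ ω, Real.exp (α * |X ω|) ∂P ≤ 2) (hvar : ∫ ω, X ω ^ 2 ∂P = 1) :
    α ^ 2 ≤ 2 := by
  have hX2 : Integrable (fun ω => X ω ^ 2) P :=
    integrable_pow_of_mem_interior_integrableExpSet
      (by simpa using re_mem_interior_integrableExpSet hX hE (z := 0) (by simpa using hα)) 2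
  have hpt : ∀ ω, 1 + α ^ 2 / 2 * X ω ^ 2 ≤ Real.exp (α * |X ω|) := fun ω => by
    have := Real.quadratic_le_exp_of_nonneg (mul_nonneg hα.le (abs_nonneg (X ω)))
    rw [mul_pow, sq_abs] at this
    linarith [mul_nonneg hα.le (abs_nonneg (X ω))]
  have hint := integral_mono (f := fun ω => 1 + α ^ 2 / 2 * X ω ^ 2)
    ((integrable_const 1).add (hX2.const_mul _)) hE hpt
  rw [integral_add (integrable_const 1) (hX2.const_mul _), integral_const_mul, hvar] at hint
  simp at hint
  linarith

lemma norm_integral_pow_mul_cexp_sub_le (hX : AEMeasurable X P) (hα : 0 < α)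
    (hE : Integrable (fun ω => Real.exp (α * |X ω|)) P)
    (hE2 : ∫ ω, Real.exp (α * |X ω|) ∂P ≤ 2) {c : ℝ} (hc : c < 1) {z : ℂ} (hz : ‖z‖ ≤ c * α)
    (n : ℕ) :
    ‖∫ ω, (X ω : ℂ) ^ n * cexp (z * X ω) ∂P - ∫ ω, (X ω : ℂ) ^ n ∂P
        - z * ∫ ω, (X ω : ℂ) ^ (n + 1) ∂P‖
      ≤ 2 * ((n + 2)! / (1 - c) ^ (n + 2) * α⁻¹ ^ (n + 2) * ‖z‖ ^ 2) := by
  set B := (n + 2)! / (1 - c) ^ (n + 2) * α⁻¹ ^ (n + 2) * ‖z‖ ^ 2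
  have hB : 0 ≤ B := by
    have : 0 < 1 - c := by linarith
    positivity
  have hzα : ‖z‖ < α := hz.trans_lt (by nlinarith)
  have hpow : ∀ k : ℕ, Integrable (fun ω => (X ω : ℂ) ^ k) P := fun k => by
    simpa using integrable_pow_mul_cexp_of_re_mem_interior_integrableExpSet
      (re_mem_interior_integrableExpSet hX hE (z := 0) (by simpa using hα)) k
  have hsplit : ∫ ω, (X ω : ℂ) ^ n * cexp (z * X ω) ∂P - ∫ ω, (X ω : ℂ) ^ n ∂P
        - z * ∫ ω, (X ω : ℂ) ^ (n + 1) ∂P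
      = ∫ ω, (X ω : ℂ) ^ n * (cexp (z * X ω) - 1 - z * X ω) ∂P := by
    have hI := integrable_pow_mul_cexp_of_re_mem_interior_integrableExpSet
      (re_mem_interior_integrableExpSet hX hE hzα) n
    rw [← integral_const_mul, ← integral_sub hI (hpow n),
      ← integral_sub (f := fun ω => _ - _) (hI.sub (hpow n)) ((hpow (n + 1)).const_mul z)]
    congr 1 with ω
    ring
  rw [hsplit]
  calc _ ≤ ∫ ω, B * Real.exp (α * |X ω|) ∂P :=
        norm_integral_le_of_norm_le (hE.const_mul B) (ae_of_all _ fun ω =>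
          norm_pow_mul_cexp_sub_one_sub_le hα hc hz (X ω) n)
    _ ≤ 2 * B := by
        rw [integral_const_mul, mul_comm 2]
        exact mul_le_mul_of_nonneg_left hE2 hB

lemma norm_complexMGF_sub_one_le [IsProbabilityMeasure P] (hX : AEMeasurable X P) (hα : 0 < α)
    (hE : Integrable (fun ω => Real.exp (α * |X ω|)) P)
    (hE2 : ∫ ω, Real.exp (α * |X ω|) ∂P ≤ 2) (hmean : ∫ ω, X ω ∂P = 0) {z : ℂ}
    (hz : ‖z‖ ≤ α / 16) :
    ‖complexMGF X P z - 1‖ ≤ 5 * α⁻¹ ^ 2 * ‖z‖ ^ 2 := by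
  have h := norm_integral_pow_mul_cexp_sub_le hX hα hE hE2 (c := 1 / 16) (z := z)
    (by norm_num) (by linarith) 0
  simp only [pow_zero, one_mul, zero_add, pow_one, integral_complex_ofReal, hmean,
    integral_const, probReal_univ, one_smul, Complex.ofReal_zero, mul_zero, sub_zero] at h
  calc _ ≤ _ := h
    _ = 1024 / 225 * α⁻¹ ^ 2 * ‖z‖ ^ 2 := by norm_num [Nat.factorial]; ring
    _ ≤ 5 * α⁻¹ ^ 2 * ‖z‖ ^ 2 := by gcongr; norm_num

lemma norm_integral_mul_cexp_sub_le [IsProbabilityMeasure P] (hX : AEMeasurable X P)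
    (hα : 0 < α) (hE : Integrable (fun ω => Real.exp (α * |X ω|)) P)
    (hE2 : ∫ ω, Real.exp (α * |X ω|) ∂P ≤ 2) (hmean : ∫ ω, X ω ∂P = 0)
    (hvar : ∫ ω, X ω ^ 2 ∂P = 1) {z : ℂ} (hz : ‖z‖ ≤ α / 16) :
    ‖∫ ω, X ω * cexp (z * X ω) ∂P - z‖ ≤ 15 * α⁻¹ ^ 3 * ‖z‖ ^ 2 := by
  have h := norm_integral_pow_mul_cexp_sub_le hX hα hE hE2 (c := 1 / 16) (z := z)
    (by norm_num) (by linarith) 1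
  simp only [pow_one, ← Complex.ofReal_pow, integral_complex_ofReal, hmean, hvar,
    Complex.ofReal_zero, Complex.ofReal_one, sub_zero, mul_one] at h
  calc _ ≤ _ := h
    _ = 49152 / 3375 * α⁻¹ ^ 3 * ‖z‖ ^ 2 := by norm_num [Nat.factorial]; ring
    _ ≤ 15 * α⁻¹ ^ 3 * ‖z‖ ^ 2 := by gcongr; norm_num

lemma norm_sub_le_of_deriv_log_complexMGF_eq [IsProbabilityMeasure P] (hX : AEMeasurable X P)
    (hα : 0 < α) (hE : Integrable (fun ω => Real.exp (α * |X ω|)) P)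
    (hE2 : ∫ ω, Real.exp (α * |X ω|) ∂P ≤ 2) (hmean : ∫ ω, X ω ∂P = 0)
    (hvar : ∫ ω, X ω ^ 2 ∂P = 1) {w σ : ℂ} (hw : ‖w‖ ≤ α / 16)
    (hσ : deriv (fun z => Complex.log (complexMGF X P z)) w = σ) :
    HasDerivAt (fun z => Complex.log (complexMGF X P z)) σ w ∧
      ‖σ - w‖ ≤ 32 * α⁻¹ ^ 3 * ‖w‖ ^ 2 := by
  have hα2 := sq_le_two_of_integral_exp_mul_abs_le hX hα hE hE2 hvar
  have hM := norm_complexMGF_sub_one_le hX hα hE hE2 hmean hw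
  have hM₁ := norm_integral_mul_cexp_sub_le hX hα hE hE2 hmean hvar hw
  have hMhalf : ‖complexMGF X P w - 1‖ ≤ 1 / 2 := by
    refine hM.trans ?_
    calc 5 * α⁻¹ ^ 2 * ‖w‖ ^ 2 ≤ 5 * α⁻¹ ^ 2 * (α / 16) ^ 2 := by gcongr
      _ ≤ 1 / 2 := by field_simp; norm_num
  have hslit : complexMGF X P w ∈ Complex.slitPlane :=
    Complex.ball_one_subset_slitPlane (by rw [Metric.mem_ball, dist_eq_norm]; linarith)
  have hd := (hasDerivAt_complexMGF (re_mem_interior_integrableExpSet hX hE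
    (hw.trans_lt (by linarith)))).clog hslit
  obtain rfl : _ = σ := hd.deriv.symm.trans hσ
  refine ⟨hd, ?_⟩
  have hcross : ‖w‖ * ‖complexMGF X P w - 1‖ ≤ 5 / 8 * α⁻¹ ^ 3 * ‖w‖ ^ 2 :=
    calc ‖w‖ * ‖complexMGF X P w - 1‖ ≤ α / 16 * (5 * α⁻¹ ^ 2 * ‖w‖ ^ 2) :=
          mul_le_mul hw hM (norm_nonneg _) (by positivity)
      _ = 5 / 16 * α ^ 2 * (α⁻¹ ^ 3 * ‖w‖ ^ 2) := by field_simp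
      _ ≤ 5 / 16 * 2 * (α⁻¹ ^ 3 * ‖w‖ ^ 2) := by gcongr
      _ = 5 / 8 * α⁻¹ ^ 3 * ‖w‖ ^ 2 := by ring
  calc _ ≤ 2 * (‖_ - w‖ + ‖w‖ * ‖complexMGF X P w - 1‖) := norm_div_sub_le hMhalf
    _ ≤ 2 * (15 * α⁻¹ ^ 3 * ‖w‖ ^ 2 + 5 / 8 * α⁻¹ ^ 3 * ‖w‖ ^ 2) := by gcongr
    _ ≤ 32 * α⁻¹ ^ 3 * ‖w‖ ^ 2 := by nlinarith [pow_pos (inv_pos.2 hα) 3, sq_nonneg ‖w‖]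

end MomentBounds

/-- The Cramér series function `λ(τ) = τ⁻³ (K(z₀(τ)) − τ z₀(τ) + τ²/2)` satisfies
`|λ(τ)| ≤ 700 α⁻³` for all `|τ| ≤ α³/64`; equivalently,
`|K(z₀(τ)) − τ z₀(τ) + τ²/2| ≤ 700 α⁻³ |τ|³` there. -/
theorem stmt_17 {Ω : Type*} [MeasurableSpace Ω] {P : Measure Ω} [IsProbabilityMeasure P]
    (X : Ω → ℝ) (hmeas : Measurable X) (α : ℝ) (hα : 0 < α)
    (hmean : ∫ ω, X ω ∂P = 0) (hvar : ∫ ω, (X ω) ^ 2 ∂P = 1)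
    (hexp : ∫⁻ ω, ENNReal.ofReal (Real.exp (α * |X ω|)) ∂P ≤ 2)
    (K : ℂ → ℂ)
    (hK : ∀ z : ℂ, K z = Complex.log (∫ ω, Complex.exp (z * X ω) ∂P))
    (z₀ : ℂ → ℂ)
    (hz₀ : ∀ τ : ℂ, ‖τ‖ ≤ α ^ 3 / 32 →
      ‖z₀ τ‖ ≤ α ^ 3 / 16 ∧ deriv K (z₀ τ) = τ ∧ ‖z₀ τ‖ ≤ 2 * ‖τ‖)
    (hz₀an : AnalyticOnNhd ℂ z₀ {τ : ℂ | ‖τ‖ ≤ α ^ 3 / 32}) :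
    ∀ τ : ℂ, ‖τ‖ ≤ α ^ 3 / 64 →
      ‖K (z₀ τ) - τ * z₀ τ + τ ^ 2 / 2‖ ≤ 700 * α⁻¹ ^ 3 * ‖τ‖ ^ 3 := by
  have hX : AEMeasurable X P := hmeas.aemeasurable
  obtain ⟨hE, hE2⟩ := integrable_and_integral_le_of_lintegral_ofReal_le
    (f := fun ω => Real.exp (α * |X ω|)) (by fun_prop) (fun ω => (Real.exp_pos _).le)
    zero_le_two (by simpa using hexp)
  have hα2 := sq_le_two_of_integral_exp_mul_abs_le hX hα hE hE2 hvar
  have hK' : K = fun z => Complex.log (complexMGF X P z) := funext hK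
  have hz₀0 : z₀ 0 = 0 := by simpa using (hz₀ 0 (by simp; positivity)).2.2
  intro τ hτ
  refine (norm_le_mul_pow_three_of_norm_deriv_le
    (f := fun σ => K (z₀ σ) - σ * z₀ σ + σ ^ 2 / 2) (g := fun σ => σ - z₀ σ)
    (by positivity : (0 : ℝ) ≤ 128 * α⁻¹ ^ 3) (by simp [hz₀0, hK]) (fun σ hσ => ?_) hτ).trans
    (by gcongr; norm_num)
  have hσ32 : ‖σ‖ ≤ α ^ 3 / 32 := hσ.trans (by linarith [pow_pos hα 3])
  obtain ⟨-, hderiv, hw⟩ := hz₀ σ hσ32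
  have hw16 : ‖z₀ σ‖ ≤ α / 16 := by nlinarith
  obtain ⟨hKd, hbound⟩ :=
    norm_sub_le_of_deriv_log_complexMGF_eq hX hα hE hE2 hmean hvar hw16 (hK' ▸ hderiv)
  refine ⟨hasDerivAt_comp_sub_mul_add_sq_div_two (hK' ▸ hKd)
    (hz₀an σ hσ32).differentiableAt.hasDerivAt, ?_⟩
  calc ‖σ - z₀ σ‖ ≤ 32 * α⁻¹ ^ 3 * ‖z₀ σ‖ ^ 2 := hbound
    _ ≤ 32 * α⁻¹ ^ 3 * (2 * ‖σ‖) ^ 2 := by gcongr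
    _ = 128 * α⁻¹ ^ 3 * ‖σ‖ ^ 2 := by ring
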